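/- Let h : [0,1] → [0,1] be a Lebesgue-measure-preserving bijection with measurable measure-preserving inverse. Define Ω√2 = {(x,y) ∈ (0,1)² : h(x) ≤ y and h⁻¹(y) ≤ x}, Ω₀ = {(x,y) ∈ (0,1)² : h(x) > y and h⁻¹(y) > x}, and Ω₁ = (0,1)² \ (Ω√2 ∪ Ω₀). Then λ₂(Ω₁) = 1 − 2·λ₂(Ω√2). -/

import Mathlib

/-!
`Ω√2` and `Ω₀` are disjoint subsets of the open unit square, which has full measure, so
`λ₂(Ω₁) = 1 - λ₂(Ω√2) - λ₂(Ω₀)`. The involution `(x, y) ↦ (h⁻¹ y, h x)` preserves `λ₂`, and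
up to the graph of `h` and the sides of the square it maps `Ω₀` onto `Ω√2`; these exceptional
sets are null, hence `λ₂(Ω₀) = λ₂(Ω√2)`.
-/

open MeasureTheory Set unitInterval

theorem MeasureTheory.Measure.ae_prod_snd_ne {α β : Type*} [MeasurableSpace α]
    [MeasurableSpace β] [MeasurableEq β] (μ : Measure α) (ν : Measure β) [SFinite ν]
    [NullSingletonClass ν] {f : α → β} (hf : Measurable f) :
    ∀ᵐ p ∂μ.prod ν, p.2 ≠ f p.1 :=
  (ae_prod_iff_ae_ae (measurableSet_eq_fun measurable_snd (hf.comp measurable_fst)).compl).2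
    (ae_of_all _ fun x => ae_ne ν (f x))

namespace unitInterval

theorem ae_pos_lt_one : ∀ᵐ x : I, 0 < x ∧ x < 1 := by
  filter_upwards [Measure.ae_ne volume 0, Measure.ae_ne volume 1] with x h0 h1
  exact ⟨nonneg'.lt_of_ne' h0, le_one'.lt_of_ne h1⟩

def openSquare : Set (I × I) := {p | 0 < p.1 ∧ p.1 < 1 ∧ 0 < p.2 ∧ p.2 < 1}

-- The paper's `Ω√2` and `Ω₀`, with `g` standing for `h⁻¹`.
def omegaSqrt2 (h g : I → I) : Set (I × I) := {p | p ∈ openSquare ∧ h p.1 ≤ p.2 ∧ g p.2 ≤ p.1}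

def omega0 (h g : I → I) : Set (I × I) := {p | p ∈ openSquare ∧ p.2 < h p.1 ∧ p.1 < g p.2}

theorem measurableSet_openSquare : MeasurableSet openSquare := by
  unfold openSquare; measurability

theorem volume_openSquare : volume openSquare = 1 := by
  have hae : ∀ᵐ p : I × I, p ∈ openSquare := by
    filter_upwards [Measure.quasiMeasurePreserving_fst.ae ae_pos_lt_one,
      Measure.quasiMeasurePreserving_snd.ae ae_pos_lt_one] with p hx hy
    exact ⟨hx.1, hx.2, hy⟩
  rw [← measure_univ (μ := (volume : Measure (I × I)))]
  exact (ae_mem_iff_measure_eq measurableSet_openSquare.nullMeasurableSet).1 hae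

variable {h g : I → I}

theorem measurableSet_omegaSqrt2 (hh : Measurable h) (hg : Measurable g) :
    MeasurableSet (omegaSqrt2 h g) := by
  unfold omegaSqrt2 openSquare; measurability

theorem measurableSet_omega0 (hh : Measurable h) (hg : Measurable g) :
    MeasurableSet (omega0 h g) := by
  unfold omega0 openSquare; measurability

theorem disjoint_omegaSqrt2_omega0 : Disjoint (omegaSqrt2 h g) (omega0 h g) :=
  disjoint_left.2 fun _ hA hB => hA.2.1.not_gt hB.2.1

theorem omegaSqrt2_union_omega0_subset : omegaSqrt2 h g ∪ omega0 h g ⊆ openSquare :=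
  union_subset (fun _ hp => hp.1) fun _ hp => hp.1

theorem volume_omega0 (hmp : MeasurePreserving h volume volume)
    (hgmp : MeasurePreserving g volume volume)
    (hgl : Function.LeftInverse g h) (hgr : Function.RightInverse g h) :
    volume (omega0 h g) = volume (omegaSqrt2 h g) := by
  have hφ : MeasurePreserving (fun p : I × I => (g p.2, h p.1)) volume volume :=
    (hgmp.prod hmp).comp Measure.measurePreserving_swap
  rw [← hφ.measure_preimage (measurableSet_omega0 hmp.measurable hgmp.measurable).nullMeasurableSet]
  refine measure_congr (Filter.eventuallyEq_set.2 ?_)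
  filter_upwards [Measure.quasiMeasurePreserving_fst.ae ae_pos_lt_one,
      Measure.quasiMeasurePreserving_snd.ae ae_pos_lt_one,
      (hmp.quasiMeasurePreserving.comp Measure.quasiMeasurePreserving_fst).ae ae_pos_lt_one,
      (hgmp.quasiMeasurePreserving.comp Measure.quasiMeasurePreserving_snd).ae ae_pos_lt_one,
      Measure.ae_prod_snd_ne volume volume hmp.measurable] with ⟨x, y⟩ hx hy hhx hgy hne
  dsimp only at hx hy hhx hgy hne
  have hne' : g y ≠ x := fun hxy => hne (by rw [← hxy, hgr y])
  simp only [omega0, omegaSqrt2, openSquare, mem_ofPred_eq, mem_preimage, hgl x, hgr y]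
  constructor
  · rintro ⟨-, hxy, hyx⟩
    exact ⟨⟨hx.1, hx.2, hy.1, hy.2⟩, hxy.le, hyx.le⟩
  · rintro ⟨-, hxy, hyx⟩
    exact ⟨⟨hgy.1, hgy.2, hhx.1, hhx.2⟩, hxy.lt_of_ne hne.symm, hyx.lt_of_ne hne'⟩

end unitInterval

theorem stmt_5_general (h g : unitInterval → unitInterval)
    (hmp : MeasurePreserving h volume volume)
    (hgl : Function.LeftInverse g h) (hgr : Function.RightInverse g h)
    (hgmp : MeasurePreserving g volume volume) :
    (volume ({p : unitInterval × unitInterval | 0 < p.1 ∧ p.1 < 1 ∧ 0 < p.2 ∧ p.2 < 1} \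
        ({p : unitInterval × unitInterval |
            (0 < p.1 ∧ p.1 < 1 ∧ 0 < p.2 ∧ p.2 < 1) ∧ h p.1 ≤ p.2 ∧ g p.2 ≤ p.1} ∪
         {p : unitInterval × unitInterval |
            (0 < p.1 ∧ p.1 < 1 ∧ 0 < p.2 ∧ p.2 < 1) ∧ p.2 < h p.1 ∧ p.1 < g p.2}))).toReal =
    1 - 2 * (volume {p : unitInterval × unitInterval |
        (0 < p.1 ∧ p.1 < 1 ∧ 0 < p.2 ∧ p.2 < 1) ∧ h p.1 ≤ p.2 ∧ g p.2 ≤ p.1}).toReal := by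
  change volume.real (openSquare \ (omegaSqrt2 h g ∪ omega0 h g)) =
    1 - 2 * volume.real (omegaSqrt2 h g)
  have hA := measurableSet_omegaSqrt2 hmp.measurable hgmp.measurable
  have hB := measurableSet_omega0 hmp.measurable hgmp.measurable
  have hS : volume.real openSquare = 1 := by rw [measureReal_def, volume_openSquare]; rfl
  have hBA : volume.real (omega0 h g) = volume.real (omegaSqrt2 h g) :=
    congrArg ENNReal.toReal (volume_omega0 hmp hgmp hgl hgr)
  rw [measureReal_sdiff omegaSqrt2_union_omega0_subset (hA.union hB),
    measureReal_union disjoint_omegaSqrt2_omega0 hB, hS, hBA]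
  ring

/-- For a measure-preserving bijection `h` of `[0,1]` with measurable measure-preserving
inverse `g`, the set `Ω₁ = (0,1)² \ (Ω√2 ∪ Ω₀)` satisfies
`λ₂(Ω₁) = 1 - 2 λ₂(Ω√2)`. -/
theorem stmt_5 (h g : unitInterval → unitInterval)
    (hbij : Function.Bijective h)
    (hmp : MeasurePreserving h volume volume)
    (hgl : Function.LeftInverse g h) (hgr : Function.RightInverse g h)
    (hgmeas : Measurable g) (hgmp : MeasurePreserving g volume volume) :
    (volume ({p : unitInterval × unitInterval | 0 < p.1 ∧ p.1 < 1 ∧ 0 < p.2 ∧ p.2 < 1} \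
        ({p : unitInterval × unitInterval |
            (0 < p.1 ∧ p.1 < 1 ∧ 0 < p.2 ∧ p.2 < 1) ∧ h p.1 ≤ p.2 ∧ g p.2 ≤ p.1} ∪
         {p : unitInterval × unitInterval |
            (0 < p.1 ∧ p.1 < 1 ∧ 0 < p.2 ∧ p.2 < 1) ∧ p.2 < h p.1 ∧ p.1 < g p.2}))).toReal =
    1 - 2 * (volume {p : unitInterval × unitInterval |
        (0 < p.1 ∧ p.1 < 1 ∧ 0 < p.2 ∧ p.2 < 1) ∧ h p.1 ≤ p.2 ∧ g p.2 ≤ p.1}).toReal :=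
  stmt_5_general h g hmp hgl hgr hgmp
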